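/- arXiv:1702.08250 — 3 statements merged into one kernel-verified Lean document; each statement's English description precedes it below -/
import Mathlib

section
/- Let (A, μ₀) be an associative unital algebra over a field k of characteristic zero, and let * be a formal *-product f * g = Σ_{n≥0} λⁿ μₙ(f,g) on A[[λ]] with bilinear maps μₙ : A × A → A. Suppose * is associative to order r ≥ 1, i.e. the order-n associators Aₙ(f,g,h) := Σ_{k=0}^{n} (μ_k(μ_{n−k}(f,g),h) − μ_k(f,μ_{n−k}(g,h))) vanish for all n ≤ r. Then A_{r+1} is a Hochschild 3-cocycle of (A, μ₀): δA_{r+1} = 0. -/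
/-!
STATEMENT 10: If a formal `*`-product `f * g = Σ λⁿ μₙ(f,g)` on `A[[λ]]` (with `μ₀` the
algebra product of the associative unital `k`-algebra `A`) is associative to order `r ≥ 1`,
then the order-`(r+1)` associator `A_{r+1}` is a Hochschild 3-cocycle: `δ A_{r+1} = 0`.
-/

open Finset

open Finset

lemma sum_simplex_cyc {M : Type*} [AddCommMonoid M] (n : ℕ) (f : ℕ → ℕ → ℕ → M) :
    ∑ p ∈ Finset.range (n+1), ∑ i ∈ Finset.range (n-p+1), f p i (n-p-i)
    = ∑ p ∈ Finset.range (n+1), ∑ i ∈ Finset.range (n-p+1), f i (n-p-i) p := by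
  rw [Finset.sum_sigma', Finset.sum_sigma']
  refine Finset.sum_nbij' (i := fun x => ⟨n - x.1 - x.2, x.1⟩)
    (j := fun x => ⟨x.2, n - x.1 - x.2⟩) ?_ ?_ ?_ ?_ ?_
  · rintro ⟨p, i⟩ h
    simp only [Finset.mem_sigma, Finset.mem_range] at h ⊢
    omega
  · rintro ⟨p, i⟩ h
    simp only [Finset.mem_sigma, Finset.mem_range] at h ⊢
    omega
  · rintro ⟨p, i⟩ h
    simp only [Finset.mem_sigma, Finset.mem_range] at h
    show (⟨p, n - (n - p - i) - p⟩ : (_ : ℕ) × ℕ) = ⟨p, i⟩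
    exact congrArg (Sigma.mk p) (by omega)
  · rintro ⟨p, i⟩ h
    simp only [Finset.mem_sigma, Finset.mem_range] at h
    show (⟨n - i - (n - p - i), i⟩ : (_ : ℕ) × ℕ) = ⟨p, i⟩
    rw [show n - i - (n - p - i) = p from by omega]
  · rintro ⟨p, i⟩ h
    simp only [Finset.mem_sigma, Finset.mem_range] at h
    show f p i (n - p - i) = f p (n - (n - p - i) - p) (n - p - i)
    rw [show n - (n - p - i) - p = i from by omega]

lemma sum_simplex_swap13 {M : Type*} [AddCommMonoid M] (n : ℕ) (f : ℕ → ℕ → ℕ → M) :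
    ∑ p ∈ Finset.range (n+1), ∑ i ∈ Finset.range (n-p+1), f p i (n-p-i)
    = ∑ p ∈ Finset.range (n+1), ∑ i ∈ Finset.range (n-p+1), f (n-p-i) i p := by
  rw [Finset.sum_sigma', Finset.sum_sigma']
  refine Finset.sum_nbij' (i := fun x => ⟨n - x.1 - x.2, x.2⟩)
    (j := fun x => ⟨n - x.1 - x.2, x.2⟩) ?_ ?_ ?_ ?_ ?_
  · rintro ⟨p, i⟩ h
    simp only [Finset.mem_sigma, Finset.mem_range] at h ⊢
    omega
  · rintro ⟨p, i⟩ h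
    simp only [Finset.mem_sigma, Finset.mem_range] at h ⊢
    omega
  · rintro ⟨p, i⟩ h
    simp only [Finset.mem_sigma, Finset.mem_range] at h
    show (⟨n - (n - p - i) - i, i⟩ : (_ : ℕ) × ℕ) = ⟨p, i⟩
    rw [show n - (n - p - i) - i = p from by omega]
  · rintro ⟨p, i⟩ h
    simp only [Finset.mem_sigma, Finset.mem_range] at h
    show (⟨n - (n - p - i) - i, i⟩ : (_ : ℕ) × ℕ) = ⟨p, i⟩
    rw [show n - (n - p - i) - i = p from by omega]
  · rintro ⟨p, i⟩ h
    simp only [Finset.mem_sigma, Finset.mem_range] at h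
    show f p i (n - p - i) = f (n - (n - p - i) - i) i (n - p - i)
    rw [show n - (n - p - i) - i = p from by omega]

def Tmap {k A : Type} [Field k] [Ring A] [Algebra k A]
    (μ : ℕ → (A →ₗ[k] A →ₗ[k] A)) (q : ℕ) (f g h : A) : A :=
  ∑ i ∈ Finset.range (q+1), (μ i (μ (q-i) f g) h - μ i f (μ (q-i) g h))

lemma pentagon {k A : Type} [Field k] [Ring A] [Algebra k A]
    (μ : ℕ → (A →ₗ[k] A →ₗ[k] A)) (n : ℕ) (a b c d : A) :
    ∑ p ∈ Finset.range (n+1),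
      (μ p a (Tmap μ (n-p) b c d)
       - Tmap μ (n-p) (μ p a b) c d
       + Tmap μ (n-p) a (μ p b c) d
       - Tmap μ (n-p) a b (μ p c d)
       + μ p (Tmap μ (n-p) a b c) d) = 0 := by
  simp only [Tmap, map_sum, map_sub, LinearMap.sum_apply, LinearMap.sub_apply,
    Finset.sum_sub_distrib, Finset.sum_add_distrib]
  rw [sum_simplex_cyc n (fun x y z => μ x (μ y (μ z a b) c) d),
      sum_simplex_cyc n (fun x y z => μ x (μ y a (μ z b c)) d),
      sum_simplex_cyc n (fun x y z => μ x a (μ y (μ z b c) d)),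
      sum_simplex_cyc n (fun x y z => μ x a (μ y b (μ z c d))),
      sum_simplex_swap13 n (fun x y z => μ y (μ x a b) (μ z c d))]
  abel


theorem order_associator_is_hochschild_cocycle
    (k : Type) [Field k] [CharZero k]
    (A : Type) [Ring A] [Algebra k A]
    (μ : ℕ → (A →ₗ[k] A →ₗ[k] A))
    (hμ0 : ∀ a b : A, μ 0 a b = a * b)
    (r : ℕ) (hr : 1 ≤ r)
    -- associativity to order r: Aₙ = 0 for all n ≤ r
    (hassoc : ∀ n ≤ r, ∀ f g h : A,
      ∑ i ∈ Finset.range (n + 1), (μ i (μ (n - i) f g) h - μ i f (μ (n - i) g h)) = 0)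
    -- F is the associator of order r+1
    (F : A → A → A → A)
    (hF : ∀ f g h : A,
      F f g h = ∑ i ∈ Finset.range (r + 2),
        (μ i (μ (r + 1 - i) f g) h - μ i f (μ (r + 1 - i) g h))) :
    -- δF = 0
    ∀ a b c d : A,
      a * F b c d - F (a * b) c d + F a (b * c) d - F a b (c * d) + F a b c * d = 0 := by
  intro a b c d
  have hT : ∀ q ≤ r, ∀ f g h : A, Tmap μ q f g h = 0 := hassoc
  have hFT : ∀ f g h : A, F f g h = Tmap μ (r+1) f g h := fun f g h => hF f g h
  have key := pentagon μ (r+1) a b c d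
  rw [Finset.sum_eq_single_of_mem 0 (Finset.mem_range.mpr (by omega))
    (fun p hp hp0 => by
      have h1 : r + 1 - p ≤ r := by
        simp only [Finset.mem_range] at hp; omega
      simp [hT _ h1])] at key
  simp only [Nat.sub_zero] at key
  simp only [hμ0, ← hFT] at key
  exact key
end

section
/- Let (A, μ₀) be an associative unital algebra over a field k of characteristic zero and * = Σ λⁿ μₙ a formal *-product on A[[λ]] that is associative to order r ≥ 1. Define A'_{r+1}(f,g,h) := Σ_{k=1}^{r} (μ_k(μ_{r+1−k}(f,g),h) − μ_k(f,μ_{r+1−k}(g,h))) (the order-(r+1) associator without the terms involving μ₀ or μ_{r+1} composed with μ₀). Then A_{r+1} = −δμ_{r+1} + A'_{r+1}, A'_{r+1} is a Hochschild 3-cocycle, and A_{r+1} = 0 holds if and only if A'_{r+1} = δμ_{r+1} is a Hochschild 3-coboundary; so the obstruction to extending associativity from order r to order r+1 lies in the third Hochschild cohomology H³(A,A). -/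
/-!
STATEMENT 11: With `*` associative to order `r ≥ 1` and
`A'_{r+1}(f,g,h) = Σ_{k=1}^{r} (μ_k(μ_{r+1−k}(f,g),h) − μ_k(f,μ_{r+1−k}(g,h)))`:
`A_{r+1} = −δμ_{r+1} + A'_{r+1}`, `A'_{r+1}` is a Hochschild 3-cocycle, and
`A_{r+1} = 0 ⟺ A'_{r+1} = δμ_{r+1}` (it is a 3-coboundary); so the obstruction to
extending associativity from order `r` to `r+1` lies in `H³(A,A)`.
-/

section Tri
variable {M : Type*} [AddCommMonoid M]

lemma tri_aux (n : ℕ) (F : ℕ → ℕ → ℕ → M) :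
    (∑ i ∈ Finset.range (n+1), ∑ j ∈ Finset.range (n - i + 1), F i j (n - i - j))
      = ∑ t ∈ (Finset.range (n+1) ×ˢ Finset.range (n+1)).filter
          (fun t => t.1 + t.2 ≤ n), F t.1 t.2 (n - t.1 - t.2) := by
  rw [Finset.sum_filter, Finset.sum_product]
  refine Finset.sum_congr rfl fun i hi => ?_
  simp only [Finset.mem_range] at hi
  rw [← Finset.sum_filter]
  apply Finset.sum_congr
  · ext j; simp only [Finset.mem_filter, Finset.mem_range]; omega
  · intros; rfl

lemma tri_cyc (n : ℕ) (F G : ℕ → ℕ → ℕ → M)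
    (h : ∀ x y z, x + y + z = n → F x y z = G y z x) :
    (∑ i ∈ Finset.range (n+1), ∑ j ∈ Finset.range (n - i + 1), F i j (n - i - j))
      = ∑ i ∈ Finset.range (n+1), ∑ j ∈ Finset.range (n - i + 1), G i j (n - i - j) := by
  rw [tri_aux, tri_aux]
  refine Finset.sum_nbij' (fun t => (t.2, n - t.1 - t.2)) (fun t => (n - t.1 - t.2, t.1))
    ?_ ?_ ?_ ?_ ?_
  · intro t ht; simp only [Finset.mem_filter, Finset.mem_product, Finset.mem_range] at *; omega
  · intro t ht; simp only [Finset.mem_filter, Finset.mem_product, Finset.mem_range] at *; omega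
  · intro t ht; simp only [Finset.mem_filter, Finset.mem_product, Finset.mem_range] at ht
    ext <;> simp <;> omega
  · intro t ht; simp only [Finset.mem_filter, Finset.mem_product, Finset.mem_range] at ht
    ext <;> simp <;> omega
  · intro t ht; simp only [Finset.mem_filter, Finset.mem_product, Finset.mem_range] at ht
    have h1 : n - t.2 - (n - t.1 - t.2) = t.1 := by omega
    simp only [h1]
    exact h t.1 t.2 (n - t.1 - t.2) (by omega)

lemma tri_swap (n : ℕ) (F G : ℕ → ℕ → ℕ → M)
    (h : ∀ x y z, x + y + z = n → F x y z = G y x z) :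
    (∑ i ∈ Finset.range (n+1), ∑ j ∈ Finset.range (n - i + 1), F i j (n - i - j))
      = ∑ i ∈ Finset.range (n+1), ∑ j ∈ Finset.range (n - i + 1), G i j (n - i - j) := by
  rw [tri_aux, tri_aux]
  refine Finset.sum_nbij' (fun t => (t.2, t.1)) (fun t => (t.2, t.1)) ?_ ?_ ?_ ?_ ?_
  · intro t ht; simp only [Finset.mem_filter, Finset.mem_product, Finset.mem_range] at *; omega
  · intro t ht; simp only [Finset.mem_filter, Finset.mem_product, Finset.mem_range] at *; omega
  · intro t _; rfl
  · intro t _; rfl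
  · intro t ht; simp only [Finset.mem_filter, Finset.mem_product, Finset.mem_range] at ht
    have h1 : n - t.2 - t.1 = n - t.1 - t.2 := by omega
    simp only [h1]
    exact h t.1 t.2 (n - t.1 - t.2) (by omega)

end Tri

def Sassoc (k : Type) [Field k] (A : Type) [Ring A] [Algebra k A]
    (μ : ℕ → (A →ₗ[k] A →ₗ[k] A)) (m : ℕ) (a b c : A) : A :=
  ∑ i ∈ Finset.range (m+1), (μ i (μ (m-i) a b) c - μ i a (μ (m-i) b c))

lemma key_identity (k : Type) [Field k] (A : Type) [Ring A] [Algebra k A]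
    (μ : ℕ → (A →ₗ[k] A →ₗ[k] A)) (n : ℕ) (f g h e : A) :
    ∑ i ∈ Finset.range (n+1),
      (μ i f (Sassoc k A μ (n-i) g h e) - Sassoc k A μ (n-i) (μ i f g) h e
        + Sassoc k A μ (n-i) f (μ i g h) e - Sassoc k A μ (n-i) f g (μ i h e)
        + μ i (Sassoc k A μ (n-i) f g h) e) = 0 := by
  simp only [Sassoc, map_sum, map_sub, Finset.sum_apply, LinearMap.coe_sum,
    LinearMap.sub_apply, LinearMap.sum_apply]
  simp only [Finset.sum_sub_distrib, Finset.sum_add_distrib]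
  have e1 : (∑ i ∈ Finset.range (n+1), ∑ j ∈ Finset.range (n - i + 1),
        μ j f (μ (n - i - j) (μ i g h) e))
      = ∑ i ∈ Finset.range (n+1), ∑ j ∈ Finset.range (n - i + 1),
        μ i f (μ j (μ (n - i - j) g h) e) :=
    tri_cyc n (fun x y z => μ y f (μ z (μ x g h) e))
      (fun x y z => μ x f (μ y (μ z g h) e)) (fun _ _ _ _ => rfl)
  have e2 : (∑ i ∈ Finset.range (n+1), ∑ j ∈ Finset.range (n - i + 1),
        μ j f (μ (n - i - j) g (μ i h e)))
      = ∑ i ∈ Finset.range (n+1), ∑ j ∈ Finset.range (n - i + 1),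
        μ i f (μ j g (μ (n - i - j) h e)) :=
    tri_cyc n (fun x y z => μ y f (μ z g (μ x h e)))
      (fun x y z => μ x f (μ y g (μ z h e))) (fun _ _ _ _ => rfl)
  have e3 : (∑ i ∈ Finset.range (n+1), ∑ j ∈ Finset.range (n - i + 1),
        μ j (μ (n - i - j) (μ i f g) h) e)
      = ∑ i ∈ Finset.range (n+1), ∑ j ∈ Finset.range (n - i + 1),
        μ i (μ j (μ (n - i - j) f g) h) e :=
    tri_cyc n (fun x y z => μ y (μ z (μ x f g) h) e)
      (fun x y z => μ x (μ y (μ z f g) h) e) (fun _ _ _ _ => rfl)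
  have e4 : (∑ i ∈ Finset.range (n+1), ∑ j ∈ Finset.range (n - i + 1),
        μ j (μ (n - i - j) f (μ i g h)) e)
      = ∑ i ∈ Finset.range (n+1), ∑ j ∈ Finset.range (n - i + 1),
        μ i (μ j f (μ (n - i - j) g h)) e :=
    tri_cyc n (fun x y z => μ y (μ z f (μ x g h)) e)
      (fun x y z => μ x (μ y f (μ z g h)) e) (fun _ _ _ _ => rfl)
  have e5a : (∑ i ∈ Finset.range (n+1), ∑ j ∈ Finset.range (n - i + 1),
        μ j (μ i f g) (μ (n - i - j) h e))
      = ∑ i ∈ Finset.range (n+1), ∑ j ∈ Finset.range (n - i + 1),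
        μ i (μ j f g) (μ (n - i - j) h e) :=
    tri_swap n (fun x y z => μ y (μ x f g) (μ z h e))
      (fun x y z => μ x (μ y f g) (μ z h e)) (fun _ _ _ _ => rfl)
  have e5b : (∑ i ∈ Finset.range (n+1), ∑ j ∈ Finset.range (n - i + 1),
        μ j (μ (n - i - j) f g) (μ i h e))
      = ∑ i ∈ Finset.range (n+1), ∑ j ∈ Finset.range (n - i + 1),
        μ i (μ j f g) (μ (n - i - j) h e) :=
    tri_cyc n (fun x y z => μ y (μ z f g) (μ x h e))
      (fun x y z => μ x (μ y f g) (μ z h e)) (fun _ _ _ _ => rfl)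
  rw [e1, e2, e3, e4, e5a, e5b]
  abel

theorem obstruction_in_third_hochschild_cohomology
    (k : Type) [Field k] [CharZero k]
    (A : Type) [Ring A] [Algebra k A]
    (μ : ℕ → (A →ₗ[k] A →ₗ[k] A))
    (hμ0 : ∀ a b : A, μ 0 a b = a * b)
    (r : ℕ) (hr : 1 ≤ r)
    (hassoc : ∀ n ≤ r, ∀ f g h : A,
      ∑ i ∈ Finset.range (n + 1), (μ i (μ (n - i) f g) h - μ i f (μ (n - i) g h)) = 0)
    -- F is the full associator A_{r+1}
    (F : A → A → A → A)
    (hF : ∀ f g h : A,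
      F f g h = ∑ i ∈ Finset.range (r + 2),
        (μ i (μ (r + 1 - i) f g) h - μ i f (μ (r + 1 - i) g h)))
    -- F' is the truncated associator A'_{r+1}
    (F' : A → A → A → A)
    (hF' : ∀ f g h : A,
      F' f g h = ∑ i ∈ Finset.Icc 1 r,
        (μ i (μ (r + 1 - i) f g) h - μ i f (μ (r + 1 - i) g h))) :
    -- A_{r+1} = −δμ_{r+1} + A'_{r+1}
    (∀ f g h : A,
      F f g h =
        -(f * μ (r + 1) g h - μ (r + 1) (f * g) h + μ (r + 1) f (g * h) - μ (r + 1) f g * h)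
        + F' f g h) ∧
    -- A'_{r+1} is a 3-cocycle: δ A'_{r+1} = 0
    (∀ a b c d : A,
      a * F' b c d - F' (a * b) c d + F' a (b * c) d - F' a b (c * d) + F' a b c * d = 0) ∧
    -- A_{r+1} = 0 ⟺ A'_{r+1} = δμ_{r+1} is a coboundary
    ((∀ f g h : A, F f g h = 0) ↔
      (∀ f g h : A,
        F' f g h =
          f * μ (r + 1) g h - μ (r + 1) (f * g) h + μ (r + 1) f (g * h) - μ (r + 1) f g * h)) := by
  -- Part 1
  have hpart1 : ∀ f g h : A,
      F f g h =
        -(f * μ (r + 1) g h - μ (r + 1) (f * g) h + μ (r + 1) f (g * h) - μ (r + 1) f g * h)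
        + F' f g h := by
    intro f g h
    rw [hF f g h, hF' f g h]
    rw [Finset.sum_range_succ, Finset.sum_range_succ']
    have hIcc : (∑ i ∈ Finset.Icc 1 r,
          (μ i (μ (r + 1 - i) f g) h - μ i f (μ (r + 1 - i) g h)))
        = ∑ i ∈ Finset.range r,
          (μ (i+1) (μ (r + 1 - (i+1)) f g) h - μ (i+1) f (μ (r + 1 - (i+1)) g h)) := by
      refine Finset.sum_nbij' (fun i => i - 1) (fun i => i + 1) ?_ ?_ ?_ ?_ ?_
      · intro i hi; simp only [Finset.mem_Icc, Finset.mem_range] at *; omega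
      · intro i hi; simp only [Finset.mem_Icc, Finset.mem_range] at *; omega
      · intro i hi; simp only [Finset.mem_Icc] at hi; show i - 1 + 1 = i; omega
      · intro i _; show i + 1 - 1 = i; omega
      · intro i hi; simp only [Finset.mem_Icc] at hi
        have : i - 1 + 1 = i := by omega
        rw [this]
    rw [hIcc]
    simp only [Nat.sub_zero, Nat.sub_self, hμ0]
    abel
  refine ⟨hpart1, ?_, ?_⟩
  · -- Part 2: cocycle
    have hS0 : ∀ m ≤ r, ∀ a b c : A, Sassoc k A μ m a b c = 0 := by
      intro m hm a b c; exact hassoc m hm a b c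
    have hSF : ∀ a b c : A, Sassoc k A μ (r+1) a b c = F a b c := by
      intro a b c; exact (hF a b c).symm
    have hδF : ∀ a b c d : A,
        a * F b c d - F (a*b) c d + F a (b*c) d - F a b (c*d) + F a b c * d = 0 := by
      intro a b c d
      have hk := key_identity k A μ (r+1) a b c d
      rw [Finset.sum_range_succ'] at hk
      rw [Finset.sum_eq_zero (fun i hi => ?_)] at hk
      · simp only [Nat.sub_zero, hμ0] at hk
        simp only [hSF] at hk
        rw [zero_add] at hk
        exact hk
      · have h0 : ∀ a b c : A, Sassoc k A μ (r - i) a b c = 0 := hS0 _ (by omega)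
        simp [h0]
    intro a b c d
    have hF'eq : ∀ x y z : A, F' x y z = F x y z
        + (x * μ (r+1) y z - μ (r+1) (x*y) z + μ (r+1) x (y*z) - μ (r+1) x y * z) := by
      intro x y z
      rw [hpart1 x y z]
      abel
    have h0 := hδF a b c d
    simp only [hF'eq]
    simp only [mul_add, add_mul, mul_sub, sub_mul, mul_assoc] at h0 ⊢
    rw [← h0]
    abel
  · -- Part 3: iff
    constructor
    · intro hz f g h
      have h1 := hpart1 f g h
      rw [hz f g h] at h1
      have h2 : F' f g h - (f * μ (r + 1) g h - μ (r + 1) (f * g) h + μ (r + 1) f (g * h)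
          - μ (r + 1) f g * h) = 0 := by
        rw [h1]; abel
      have := sub_eq_zero.mp h2
      exact this
    · intro he f g h
      rw [hpart1 f g h, he f g h]
      abel
end

section
/- Let (A, μ₀) be a commutative associative unital algebra over a field k of characteristic zero and * = Σ λⁿ μₙ a formal *-product on A[[λ]] associative to order r ≥ 1, such that every μᵢ with 1 ≤ i ≤ r is symmetric (μᵢ(a,b) = μᵢ(b,a)). Then the truncated associator A'_{r+1}(f,g,h) := Σ_{k=1}^{r} (μ_k(μ_{r+1−k}(f,g),h) − μ_k(f,μ_{r+1−k}(g,h))) is invariant under the first eulerian idempotent e₃^{(1)} = (1/3)id − (1/6)((123)+(132)−(12)−(23)) − (1/3)(13) ∈ ℚ[S₃], acting on trilinear maps by permuting their arguments; hence A'_{r+1} is a Harrison 3-cochain and the obstruction to extending a commutative *-product lies in the third Harrison cohomology Harr³(A,A). -/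
/-!
STATEMENT 12: For a commutative `(A, μ₀)` and an abelian-to-order-`r` formal `*`-product
(each `μᵢ`, `1 ≤ i ≤ r`, symmetric), associative to order `r ≥ 1`, the truncated associator
`A'_{r+1}` is invariant under the first eulerian idempotent
`e₃^{(1)} = (1/3)id − (1/6)((123)+(132)−(12)−(23)) − (1/3)(13) ∈ ℚ[S₃]`
acting on trilinear maps by permuting their arguments; hence `A'_{r+1}` is a Harrison
3-cochain and the obstruction lies in `Harr³(A,A)`.
-/
theorem truncated_associator_eulerian_invariant
    (k : Type) [Field k] [CharZero k]
    (A : Type) [CommRing A] [Algebra k A]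
    (μ : ℕ → (A →ₗ[k] A →ₗ[k] A))
    (hμ0 : ∀ a b : A, μ 0 a b = a * b)
    (r : ℕ) (hr : 1 ≤ r)
    -- every μᵢ, 1 ≤ i ≤ r, is symmetric
    (hsymm : ∀ i, 1 ≤ i → i ≤ r → ∀ a b : A, μ i a b = μ i b a)
    -- associativity to order r
    (hassoc : ∀ n ≤ r, ∀ f g h : A,
      ∑ i ∈ Finset.range (n + 1), (μ i (μ (n - i) f g) h - μ i f (μ (n - i) g h)) = 0)
    -- F' is the truncated associator A'_{r+1}
    (F' : A → A → A → A)
    (hF' : ∀ f g h : A,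
      F' f g h = ∑ i ∈ Finset.Icc 1 r,
        (μ i (μ (r + 1 - i) f g) h - μ i f (μ (r + 1 - i) g h))) :
    -- e₃^{(1)}.A'_{r+1} = A'_{r+1}, where (σ.F)(a₁,a₂,a₃) = F(a_{σ⁻¹(1)},a_{σ⁻¹(2)},a_{σ⁻¹(3)})
    ∀ a b c : A,
      (3⁻¹ : k) • F' a b c
        - (6⁻¹ : k) • (F' c a b + F' b c a - F' b a c - F' a c b)
        - (3⁻¹ : k) • F' c b a
      = F' a b c := by
  have anti : ∀ a b c : A, F' c b a = - F' a b c := by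
    intro a b c
    rw [hF' c b a, hF' a b c, ← Finset.sum_neg_distrib]
    refine Finset.sum_congr rfl ?_
    intro i hi
    obtain ⟨hi1, hi2⟩ := Finset.mem_Icc.mp hi
    have hj1 : 1 ≤ r + 1 - i := by omega
    have hj2 : r + 1 - i ≤ r := by omega
    rw [hsymm _ hj1 hj2 c b, hsymm _ hj1 hj2 b a,
      hsymm _ hi1 hi2 (μ (r + 1 - i) b c) a, hsymm _ hi1 hi2 c (μ (r + 1 - i) a b)]
    abel
  have key : ∀ a b c : A, F' a b c + F' c a b + F' b c a = 0 := by
    intro a b c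
    rw [hF' a b c, hF' c a b, hF' b c a, ← Finset.sum_add_distrib, ← Finset.sum_add_distrib]
    refine Finset.sum_eq_zero ?_
    intro i hi
    obtain ⟨hi1, hi2⟩ := Finset.mem_Icc.mp hi
    rw [hsymm _ hi1 hi2 a (μ (r + 1 - i) b c), hsymm _ hi1 hi2 c (μ (r + 1 - i) a b),
      hsymm _ hi1 hi2 (μ (r + 1 - i) c a) b]
    abel
  intro a b c
  have h1 : F' c b a = - F' a b c := anti a b c
  have h2 : F' b a c = - F' c a b := anti c a b
  have h3 : F' a c b = - F' b c a := anti b c a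
  have h4 : F' b c a = - F' a b c - F' c a b := by
    have := key a b c; linear_combination this
  rw [h1, h2, h3, h4]
  match_scalars <;> norm_num
end
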